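/- arXiv:2007.16114 — 2 statements merged into one kernel-verified Lean document; each statement's English description precedes it below -/
import Mathlib

section
/- For every natural number n, the cardinal B-spline B_n(x) = (1/n!) · Δ^{n+1} x_+^n, where Δ^{n+1} f(x) = Σ_{ℓ=0}^{n+1} (-1)^ℓ C(n+1,ℓ) f(x-ℓ) and x_+^n = (max(0,x))^n, satisfies B_n(x) ≥ 0 for all real x. -/
open MeasureTheory

noncomputable def truncPow (x : ℝ) (n : ℕ) : ℝ := if 0 ≤ x then x ^ n else 0

noncomputable def findiff (m : ℕ) (f : ℝ → ℝ) (x : ℝ) : ℝ :=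
  ∑ ℓ ∈ Finset.range (m + 1), (-1 : ℝ) ^ ℓ * (m.choose ℓ : ℝ) * f (x - ℓ)

noncomputable def Bspline (n : ℕ) (x : ℝ) : ℝ :=
  (1 / (n.factorial : ℝ)) * findiff (n + 1) (fun t => truncPow t n) x

/-!
Integrating `Δᵐ f` over a unit window `[x - 1, x]` gives `Δᵐ⁺¹ F (x)` for an antiderivative `F`
of `f`, and `x₊ⁿ⁺¹ / (n + 1)` is an antiderivative of `x₊ⁿ`. Hence
`B_{n+1}(x) = ∫_{x-1}^{x} B_n(t) dt`, and nonnegativity propagates by induction from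
`B_0(x) = x₊⁰ - (x - 1)₊⁰`, a backward difference of a monotone function.
-/

lemma truncPow_mono (n : ℕ) : Monotone (truncPow · n) := by
  intro a b hab
  show truncPow a n ≤ truncPow b n
  unfold truncPow
  split_ifs with ha hb hb
  · exact pow_le_pow_left₀ ha hab n
  · exact absurd (ha.trans hab) hb
  · positivity
  · rfl

lemma truncPow_eq_max_pow {n : ℕ} (hn : n ≠ 0) (x : ℝ) : truncPow x n = max x 0 ^ n := by
  unfold truncPow
  split_ifs with hx
  · rw [max_eq_left hx]
  · rw [max_eq_right (not_le.mp hx).le, zero_pow hn]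

lemma continuous_truncPow {n : ℕ} (hn : n ≠ 0) : Continuous (truncPow · n) := by
  simp_rw [truncPow_eq_max_pow hn]
  fun_prop

lemma hasDerivWithinAt_truncPow_succ (n : ℕ) (x : ℝ) :
    HasDerivWithinAt (truncPow · (n + 1)) ((n + 1) * truncPow x n) (Set.Ioi x) x := by
  rcases lt_or_ge x 0 with hx | hx
  · have hzero : (truncPow · (n + 1)) =ᶠ[nhds x] fun _ => 0 := by
      filter_upwards [eventually_lt_nhds hx] with t ht
      exact if_neg ht.not_ge
    simpa [truncPow, hx.not_ge] using
      ((hasDerivAt_const x (0 : ℝ)).congr_of_eventuallyEq hzero).hasDerivWithinAt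
  · have hpow : Set.EqOn (truncPow · (n + 1)) (· ^ (n + 1)) (Set.Ioi x) := fun t ht =>
      if_pos (hx.trans ht.le)
    rw [show truncPow x n = x ^ n from if_pos hx]
    simpa using ((hasDerivAt_pow (n + 1) x).hasDerivWithinAt).congr hpow (if_pos hx)

lemma integral_truncPow (n : ℕ) (a b : ℝ) :
    ∫ t in a..b, truncPow t n = (truncPow b (n + 1) - truncPow a (n + 1)) / (n + 1) := by
  have hftc : ∫ t in a..b, (n + 1) * truncPow t n = truncPow b (n + 1) - truncPow a (n + 1) :=
    intervalIntegral.integral_eq_sub_of_hasDeriv_right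
      (continuous_truncPow n.succ_ne_zero).continuousOn
      (fun x _ => hasDerivWithinAt_truncPow_succ n x)
      ((truncPow_mono n).intervalIntegrable.const_mul _)
  rw [intervalIntegral.integral_const_mul] at hftc
  rw [← hftc]
  field_simp

lemma findiff_zero (f : ℝ → ℝ) (x : ℝ) : findiff 0 f x = f x := by
  simp [findiff]

lemma findiff_succ (m : ℕ) (f : ℝ → ℝ) (x : ℝ) :
    findiff (m + 1) f x = findiff m f x - findiff m f (x - 1) := by
  have hcomm : ∀ k y, findiff k f y =
      ∑ i ∈ Finset.range (k + 1), (k.choose i : ℝ) * ((-1) ^ i * f (y - i)) :=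
    fun k y => Finset.sum_congr rfl fun i _ => by ring
  simp only [hcomm]
  rw [Finset.sum_choose_succ_mul (fun i _ => (-1 : ℝ) ^ i * f (x - i)), sub_eq_add_neg,
    ← Finset.sum_neg_distrib]
  congr 1
  refine Finset.sum_congr rfl fun i _ => ?_
  rw [Nat.cast_succ, sub_add_eq_sub_sub_swap]
  ring

lemma findiff_div_const (m : ℕ) (f : ℝ → ℝ) (c x : ℝ) :
    findiff m (fun t => f t / c) x = findiff m f x / c := by
  simp only [findiff, Finset.sum_div, mul_div_assoc]

lemma integral_findiff {f F : ℝ → ℝ} (hf : ∀ a b, IntervalIntegrable f volume a b)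
    (hF : ∀ a b, ∫ t in a..b, f t = F b - F a) (m : ℕ) (x : ℝ) :
    ∫ t in (x - 1)..x, findiff m f t = findiff (m + 1) F x := by
  rw [findiff_succ]
  simp only [findiff]
  rw [intervalIntegral.integral_finsetSum, ← Finset.sum_sub_distrib]
  · refine Finset.sum_congr rfl fun ℓ _ => ?_
    rw [intervalIntegral.integral_const_mul, intervalIntegral.integral_comp_sub_right, hF]
    ring
  · intro ℓ _
    have hshift := (hf (x - 1 - ℓ) (x - ℓ)).comp_sub_right (ℓ : ℝ)
    rw [sub_add_cancel, sub_add_cancel] at hshift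
    exact hshift.const_mul _

lemma Bspline_eq_findiff (n : ℕ) :
    Bspline n = findiff (n + 1) (fun t => truncPow t n / n.factorial) := by
  funext x
  rw [Bspline, findiff_div_const, one_div_mul_eq_div]

lemma Bspline_succ_eq_integral (n : ℕ) (x : ℝ) :
    Bspline (n + 1) x = ∫ t in (x - 1)..x, Bspline n t := by
  rw [Bspline_eq_findiff, Bspline_eq_findiff]
  refine (integral_findiff (fun a b => (truncPow_mono n).intervalIntegrable.div_const _)
    (fun a b => ?_) _ _).symm
  rw [intervalIntegral.integral_div, integral_truncPow, Nat.factorial_succ]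
  push_cast
  field_simp

theorem Bspline_nonneg (n : ℕ) (x : ℝ) : 0 ≤ Bspline n x := by
  induction n generalizing x with
  | zero =>
    rw [Bspline, findiff_succ, findiff_zero, findiff_zero]
    exact mul_nonneg (by positivity) (sub_nonneg.mpr (truncPow_mono 0 (by linarith)))
  | succ n ih =>
    rw [Bspline_succ_eq_integral]
    exact intervalIntegral.integral_nonneg (by linarith) fun t _ => ih t
end

section
/- For natural numbers n and m with 0 ≤ m ≤ n-1, the m-th derivative of the cardinal B-spline satisfies the differentiation rule B_n^{(m)}(x) = (1/(n-m)!) Δ^{n+1} x_+^{n-m} for all real x. -/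
open MeasureTheory

/-!
With `p k t := t₊ᵏ / k!` one has `B_n = Δ^{n+1} p n`. As a finite combination of translates,
`Δ^{n+1}` commutes with differentiation, and `p (k + 1)` is differentiable with derivative `p k`
as long as `k ≥ 1`; so differentiating `m ≤ n - 1` times lowers the exponent to `n - m ≥ 1`.
-/

lemma truncPow_of_nonneg {x : ℝ} (hx : 0 ≤ x) (k : ℕ) : truncPow x k = x ^ k := if_pos hx

lemma truncPow_of_nonpos {x : ℝ} (hx : x ≤ 0) {k : ℕ} (hk : k ≠ 0) : truncPow x k = 0 := by
  rcases hx.lt_or_eq with hx | rfl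
  · exact if_neg hx.not_ge
  · simp [truncPow, hk]

lemma hasDerivAt_truncPow {k : ℕ} (hk : k ≠ 0) (x : ℝ) :
    HasDerivAt (fun t => truncPow t (k + 1)) ((k + 1) * truncPow x k) x := by
  have hpow (y : ℝ) : HasDerivAt (fun t => t ^ (k + 1)) ((k + 1) * y ^ k) y := by
    simpa using hasDerivAt_pow (k + 1) y
  rcases lt_trichotomy x 0 with hx | rfl | hx
  · rw [truncPow_of_nonpos hx.le hk, mul_zero]
    refine (hasDerivAt_const x 0).congr_of_eventuallyEq ?_
    filter_upwards [eventually_lt_nhds hx] with t ht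
    exact truncPow_of_nonpos ht.le k.succ_ne_zero
  · -- the one-sided derivatives at the kink both vanish
    rw [truncPow_of_nonpos le_rfl hk, mul_zero, ← hasDerivWithinAt_univ, ← Set.Iic_union_Ici]
    refine .union ((hasDerivWithinAt_const 0 _ 0).congr (fun t ht => ?_) ?_) ?_
    · exact truncPow_of_nonpos ht k.succ_ne_zero
    · exact truncPow_of_nonpos le_rfl k.succ_ne_zero
    · have := (hpow 0).hasDerivWithinAt (s := Set.Ici 0)
      rw [zero_pow hk, mul_zero] at this
      exact this.congr (fun t ht => truncPow_of_nonneg ht _) (truncPow_of_nonneg le_rfl _)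
  · rw [truncPow_of_nonneg hx.le]
    refine (hpow x).congr_of_eventuallyEq ?_
    filter_upwards [eventually_gt_nhds hx] with t ht
    exact truncPow_of_nonneg ht.le _

noncomputable def scaledTruncPow (k : ℕ) (t : ℝ) : ℝ := (1 / (k.factorial : ℝ)) * truncPow t k

lemma hasDerivAt_scaledTruncPow {k : ℕ} (hk : k ≠ 0) (x : ℝ) :
    HasDerivAt (scaledTruncPow (k + 1)) (scaledTruncPow k x) x := by
  refine ((hasDerivAt_truncPow hk x).const_mul (1 / ((k + 1).factorial : ℝ))).congr_deriv ?_
  rw [scaledTruncPow, Nat.factorial_succ, Nat.cast_mul, Nat.cast_succ]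
  field_simp

lemma findiff_const_mul (M : ℕ) (c : ℝ) (f : ℝ → ℝ) (x : ℝ) :
    findiff M (fun t => c * f t) x = c * findiff M f x := by
  simp only [findiff, Finset.mul_sum]
  exact Finset.sum_congr rfl fun ℓ _ => by ring

lemma hasDerivAt_findiff (M : ℕ) {f f' : ℝ → ℝ} (hf : ∀ x, HasDerivAt f (f' x) x) (x : ℝ) :
    HasDerivAt (findiff M f) (findiff M f' x) x := by
  refine HasDerivAt.fun_sum fun ℓ _ => HasDerivAt.const_mul _ ?_
  simpa using (hf (x - ℓ)).comp_sub_const x ℓ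

lemma iteratedDeriv_findiff_scaledTruncPow (M : ℕ) {k : ℕ} (hk : k ≠ 0) (m : ℕ) :
    iteratedDeriv m (findiff M (scaledTruncPow (k + m))) = findiff M (scaledTruncPow k) := by
  induction m with
  | zero => simp
  | succ m ih =>
    have hderiv :
        deriv (findiff M (scaledTruncPow (k + m + 1))) = findiff M (scaledTruncPow (k + m)) :=
      funext fun x => (hasDerivAt_findiff M (hasDerivAt_scaledTruncPow (by omega)) x).deriv
    rw [iteratedDeriv_succ', ← add_assoc, hderiv, ih]

theorem Bspline_iteratedDeriv (n m : ℕ) (hm : m + 1 ≤ n) (x : ℝ) :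
    iteratedDeriv m (Bspline n) x =
      (1 / ((n - m).factorial : ℝ)) * findiff (n + 1) (fun t => truncPow t (n - m)) x := by
  have hB : Bspline n = findiff (n + 1) (scaledTruncPow (n - m + m)) := by
    rw [Nat.sub_add_cancel (by omega : m ≤ n)]
    exact funext fun y => (findiff_const_mul _ _ _ y).symm
  rw [hB, iteratedDeriv_findiff_scaledTruncPow _ (by omega), ← findiff_const_mul]
  rfl
end
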